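/- For every monad S on the category of sets (Type u) such that the unit component η_B : B → S(B) is an isomorphism for every finite set B, there exists exactly one morphism of monads from S to the ultrafilter monad. (The ultrafilter monad is the terminal monad on Set restricting to the identity on finite sets.) -/

import Mathlib

open CategoryTheory

universe u

namespace Stmt4Aux

variable (S : Monad (Type u)) (hS : ∀ (B : Type u), Finite B → IsIso (S.η.app B))

abbrev P : Type u := ULift.{u} Prop

noncomputable def einv (B : Type u) [Finite B] : S.obj B → B :=
  letI : IsIso (S.η.app B) := hS B ‹_›
  inv (S.η.app B)

lemma einv_e (B : Type u) [Finite B] (b : B) : einv S hS B (S.η.app B b) = b := by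
  letI : IsIso (S.η.app B) := hS B ‹_›
  exact types_congr_hom (IsIso.hom_inv_id (S.η.app B)) b

lemma e_einv (B : Type u) [Finite B] (s : S.obj B) : S.η.app B (einv S hS B s) = s := by
  letI : IsIso (S.η.app B) := hS B ‹_›
  exact types_congr_hom (IsIso.inv_hom_id (S.η.app B)) s

lemma nat_e {B C : Type u} (f : B → C) (b : B) :
    S.map (↾f) (S.η.app B b) = S.η.app C (f b) :=
  (types_congr_hom (S.η.naturality (↾f)) b).symm

lemma key {B C : Type u} [Finite B] [Finite C] (f : B → C) (s : S.obj B) :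
    einv S hS C (S.map (↾f) s) = f (einv S hS B s) := by
  conv_lhs => rw [← e_einv S hS B s, nat_e, einv_e]

/-- μ on finite objects is `S.map (einv)`. -/
lemma mu_fin (B : Type u) [Finite B] (s : S.obj (S.obj B)) :
    S.μ.app B s = S.map (↾(einv S hS B)) s := by
  letI : IsIso (S.η.app B) := hS B ‹_›
  have h := S.right_unit B
  -- h : S.map (S.η.app B) ≫ S.μ.app B = 𝟙 _
  have h2 : S.map (↾(einv S hS B)) ≫ S.map (S.η.app B) ≫ S.μ.app B
      = S.map (↾(einv S hS B)) := by rw [h]; rfl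
  have h3 : S.map (↾(einv S hS B)) ≫ S.map (S.η.app B) = 𝟙 _ := by
    rw [← S.map_comp, ← S.map_id]
    congr 1
    ext x
    exact e_einv S hS B x
  calc S.μ.app B s = (S.map (↾(einv S hS B)) ≫ S.map (S.η.app B) ≫ S.μ.app B) s := by
        rw [← Category.assoc, h3]; rfl
    _ = S.map (↾(einv S hS B)) s := by rw [h2]

/-- characteristic function -/
def chi {X : Type u} (A : Set X) : X → P := fun x => ULift.up (x ∈ A)

noncomputable def memb {X : Type u} (A : Set X) (x : S.obj X) : Prop :=
  (einv S hS P (S.map (↾(chi A)) x)).down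

/-- pairing computed componentwise -/
lemma memb_pair {X : Type u} (A B : Set X) (x : S.obj X)
    (op : Prop → Prop → Prop) :
    (einv S hS P (S.map (↾fun y => ULift.up (op (y ∈ A) (y ∈ B))) x)).down
      ↔ op (memb S hS A x) (memb S hS B x) := by
  classical
  set pair : X → Prod.{u,u} P P := fun y => (ULift.up (y ∈ A), ULift.up (y ∈ B)) with hpair
  set q : Prod.{u,u} P P := einv S hS (Prod.{u,u} P P) (S.map (↾pair) x) with hq
  have hcomp : ∀ (f : Prod.{u,u} P P → P) (g : X → P), (∀ y, f (pair y) = g y) →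
      einv S hS P (S.map (↾g) x) = f q := by
    intro f g hfg
    have hg : S.map (↾g) x = S.map (↾f) (S.map (↾pair) x) := by
      rw [← FunctorToTypes.map_comp_apply]
      rw [show (↾g : X ⟶ P) = ↾pair ≫ ↾f from TypeCat.homEquiv.injective (funext fun y => (hfg y).symm)]
    rw [hg]
    exact key S hS f _
  have h1 : memb S hS A x ↔ q.1.down := by
    unfold memb
    rw [hcomp Prod.fst (chi A) (fun y => rfl)]
  have h2 : memb S hS B x ↔ q.2.down := by
    unfold memb
    rw [hcomp Prod.snd (chi B) (fun y => rfl)]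
  have h3 := hcomp (fun p => ULift.up (op p.1.down p.2.down))
      (fun y => ULift.up (op (y ∈ A) (y ∈ B))) (fun y => rfl)
  rw [h3, h1, h2]

lemma memb_inter {X : Type u} (A B : Set X) (x : S.obj X) :
    memb S hS (A ∩ B) x ↔ memb S hS A x ∧ memb S hS B x := by
  have := memb_pair S hS A B x And
  have hc : (fun y => ULift.up (And (y ∈ A) (y ∈ B))) = chi (A ∩ B) := rfl
  rw [hc] at this
  exact this

lemma memb_union {X : Type u} (A B : Set X) (x : S.obj X) :
    memb S hS (A ∪ B) x ↔ memb S hS A x ∨ memb S hS B x := by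
  have := memb_pair S hS A B x Or
  have hc : (fun y => ULift.up (Or (y ∈ A) (y ∈ B))) = chi (A ∪ B) := rfl
  rw [hc] at this
  exact this

lemma memb_compl {X : Type u} (A : Set X) (x : S.obj X) :
    memb S hS Aᶜ x ↔ ¬ memb S hS A x := by
  unfold memb
  have hg : S.map (↾(chi (Aᶜ))) x
      = S.map (↾fun p : P => ULift.up (¬ p.down)) (S.map (↾(chi A)) x) := by
    rw [← FunctorToTypes.map_comp_apply]
    rfl
  rw [hg, key S hS (C := P) (fun p : P => ULift.up (¬ p.down)) (S.map (↾(chi A)) x)]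

lemma memb_univ {X : Type u} (x : S.obj X) : memb S hS Set.univ x := by
  have := memb_inter S hS Set.univ Set.univ x
  rw [Set.univ_inter] at this
  by_contra h
  have hc := (memb_compl S hS Set.univ x).2 h
  have := memb_union S hS Set.univ (Set.univ)ᶜ x
  rw [Set.union_compl_self] at this
  exact h (this.2 (Or.inr hc))

lemma memb_mono {X : Type u} {A B : Set X} (h : A ⊆ B) (x : S.obj X)
    (hA : memb S hS A x) : memb S hS B x := by
  have hu : A ∪ B = B := Set.union_eq_self_of_subset_left h
  have := memb_union S hS A B x
  rw [hu] at this
  exact this.2 (Or.inl hA)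

/-- The ultrafilter associated to `x : S X`. -/
noncomputable def phi (X : Type u) (x : S.obj X) : Ultrafilter X :=
  Ultrafilter.ofComplNotMemIff
    { sets := {A | memb S hS A x}
      univ_sets := memb_univ S hS x
      sets_of_superset := fun hA h => memb_mono S hS h _ hA
      inter_sets := fun hA hB => (memb_inter S hS _ _ _).2 ⟨hA, hB⟩ }
    (by
      intro A
      simp only [Filter.mem_mk, Set.mem_setOf_eq]
      rw [memb_compl S hS A x]
      exact not_not)

lemma mem_phi {X : Type u} (A : Set X) (x : S.obj X) :
    A ∈ phi S hS X x ↔ memb S hS A x := Iff.rfl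

lemma memb_map {X Y : Type u} (f : X → Y) (A : Set Y) (x : S.obj X) :
    memb S hS A (S.map (↾f) x) ↔ memb S hS (f ⁻¹' A) x := by
  unfold memb
  rw [← FunctorToTypes.map_comp_apply]
  rfl

lemma memb_eta {X : Type u} (A : Set X) (x : X) :
    memb S hS A (S.η.app X x) ↔ x ∈ A := by
  unfold memb
  rw [nat_e, einv_e]
  exact Iff.rfl

/-- Any monad hom to the ultrafilter monad agrees with `phi`. -/
lemma psi_eq_phi (ψ : MonadHom S (ofTypeMonad Ultrafilter.{u}))
    {X : Type u} (x : S.obj X) : ψ.app X x = phi S hS X x := by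
  apply Ultrafilter.ext
  intro A
  rw [mem_phi]
  have hnat := types_congr_hom (ψ.toNatTrans.naturality (↾(chi A))) x
  -- hnat : ((ofTypeMonad Ultrafilter).map (chi A)) (ψ.app X x) = ψ.app P (S.map (chi A) x)
  have heta := types_congr_hom (ψ.app_η P) (einv S hS P (S.map (↾(chi A)) x))
  -- heta : ψ.app P (S.η.app P _) = pure _
  simp only [types_comp_apply] at hnat heta
  rw [e_einv S hS P] at heta
  have hmap : (ofTypeMonad Ultrafilter.{u}).map (↾(chi A)) (ψ.app X x)
      = Ultrafilter.map (chi A) (ψ.app X x) := rfl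
  have hset : {p : P | p.down} ∈ Ultrafilter.map (chi A) ((show Ultrafilter X from ψ.app X x))
      ↔ A ∈ (show Ultrafilter X from ψ.app X x) := by
    rw [Ultrafilter.mem_map]
    exact Iff.rfl
  rw [← hset, ← hmap, ← hnat]
  rw [heta]
  show {p : P | p.down} ∈ (pure (einv S hS P (S.map (↾(chi A)) x)) : Ultrafilter P) ↔ _
  rw [Ultrafilter.mem_pure]
  exact Iff.rfl

end Stmt4Aux

open Stmt4Aux in
/-- For every monad `S` on the category of sets such that the unit component
`η_B : B → S(B)` is an isomorphism for every finite set `B`, there exists exactly one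
morphism of monads from `S` to the ultrafilter monad.  (The ultrafilter monad is the
terminal monad on `Set` restricting to the identity on finite sets.) -/
theorem stmt4 (S : Monad (Type u))
    (hS : ∀ (B : Type u), Finite B → IsIso (S.η.app B)) :
    ∃ φ : MonadHom S (ofTypeMonad Ultrafilter.{u}),
      ∀ ψ : MonadHom S (ofTypeMonad Ultrafilter.{u}), ψ = φ := by
  classical
  refine ⟨{ app := fun X => ↾(phi S hS X), naturality := ?_, app_η := ?_, app_μ := ?_ }, ?_⟩
  · intro X Y f
    refine TypeCat.homEquiv.injective (funext fun x => ?_)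
    apply Ultrafilter.ext
    intro A
    show memb S hS A (S.map (↾(f : X → Y)) x) ↔ A ∈ Ultrafilter.map f (phi S hS X x)
    rw [Ultrafilter.mem_map, memb_map]
    exact Iff.rfl
  · intro X
    refine TypeCat.homEquiv.injective (funext fun x => ?_)
    apply Ultrafilter.ext
    intro A
    show memb S hS A (S.η.app X x) ↔ A ∈ (pure x : Ultrafilter X)
    rw [memb_eta, Ultrafilter.mem_pure]
  · intro X
    refine TypeCat.homEquiv.injective (funext fun x => ?_)
    apply Ultrafilter.ext
    intro A
    simp only [TypeCat.homEquiv_apply, types_comp_apply]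
    show memb S hS A (S.μ.app X x)
      ↔ A ∈ joinM (phi S hS (Ultrafilter X) (S.map (↾(phi S hS X)) x))
    have hjoin : ∀ (u : Ultrafilter (Ultrafilter X)),
        (A ∈ joinM u ↔ {v : Ultrafilter X | A ∈ v} ∈ u) := fun u => Iff.rfl
    rw [hjoin, mem_phi, memb_map]
    have hmu := types_congr_hom (S.μ.naturality (↾(chi A))) x
    simp only [types_comp_apply] at hmu
    unfold memb
    have hstep : S.map (↾(chi A)) (S.μ.app X x) = S.μ.app P (S.map (S.map (↾(chi A))) x) :=
      hmu.symm
    rw [hstep, mu_fin S hS P, ← FunctorToTypes.map_comp_apply]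
    have hc : (S.map (↾(chi A)) ≫ ↾(einv S hS P)) = ↾(chi ((phi S hS X) ⁻¹' {v | A ∈ v})) := by
      refine TypeCat.homEquiv.injective (funext fun y => ?_)
      show einv S hS P (S.map (↾(chi A)) y) = ULift.up (memb S hS A y)
      rfl
    rw [hc]
  · intro ψ
    apply MonadHom.ext
    funext X
    refine TypeCat.homEquiv.injective (funext fun x => ?_)
    exact psi_eq_phi S hS ψ x
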